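/- arXiv:2207.07344 — 14 statements merged into one kernel-verified Lean document; each statement's English description precedes it below -/
import Mathlib

section
/- A ring R is reversible if and only if for every a, b in R, ab being an idempotent implies ba is an idempotent. -/
/-- A ring is *i-reversible* if whenever `a * b` is a non-zero idempotent, `b * a` is an
idempotent. -/
def IsIReversible (S : Type*) [Ring S] : Prop :=
  ∀ a b : S, IsIdempotentElem (a * b) → a * b ≠ 0 → IsIdempotentElem (b * a)

/-- A ring is *reversible* if `a * b = 0` implies `b * a = 0`. -/
def IsReversible (S : Type*) [Ring S] : Prop :=
  ∀ a b : S, a * b = 0 → b * a = 0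

/-- A ring has only trivial idempotents if its only idempotents are `0` and `1`. -/
def HasOnlyTrivialIdempotents (S : Type*) [Ring S] : Prop :=
  ∀ e : S, IsIdempotentElem e → e = 0 ∨ e = 1

/-- A ring `R` is reversible if and only if for every `a, b ∈ R`, `a * b` being an idempotent
implies that `b * a` is an idempotent. -/
theorem isReversible_iff_mul_idempotent_comm (R : Type*) [Ring R] :
    IsReversible R ↔ ∀ a b : R, IsIdempotentElem (a * b) → IsIdempotentElem (b * a) := by
  constructor
  · intro hrev a b hab
    have h1 : a * (b - b * a * b) = 0 := by
      have := hab
      unfold IsIdempotentElem at this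
      linear_combination (norm := noncomm_ring) -this
    have h2 := hrev a (b - b * a * b) h1
    unfold IsIdempotentElem
    have : (b - b * a * b) * a = b * a - (b * a) * (b * a) := by noncomm_ring
    rw [this] at h2
    linear_combination (norm := noncomm_ring) -h2
  · intro h a b hab
    have h0 : IsIdempotentElem (a * b) := by
      unfold IsIdempotentElem; rw [hab]; simp
    have h1 := h a b h0
    unfold IsIdempotentElem at h1
    have : b * a * (b * a) = b * (a * b) * a := by noncomm_ring
    rw [this, hab] at h1
    simpa using h1.symm
end

section
/- If a ring R has only trivial idempotents (0 and 1), then the trivial extension T(R,R) has only trivial idempotents, and hence T(R,R) is i-reversible. -/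
/-- If a ring `R` has only trivial idempotents, then the trivial extension `T(R,R)` has only
trivial idempotents, and hence `T(R,R)` is i-reversible. -/
theorem trivSqZeroExt_hasOnlyTrivialIdempotents_and_isIReversible (R : Type*) [Ring R]
    (h : HasOnlyTrivialIdempotents R) :
    HasOnlyTrivialIdempotents (TrivSqZeroExt R R) ∧ IsIReversible (TrivSqZeroExt R R) := by
  have H : HasOnlyTrivialIdempotents (TrivSqZeroExt R R) := by
    intro e he
    have hfst : e.fst * e.fst = e.fst := congrArg TrivSqZeroExt.fst he
    have hsnd : e.fst * e.snd + e.snd * e.fst = e.snd := by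
      have := congrArg TrivSqZeroExt.snd he
      simpa [TrivSqZeroExt.snd_mul, MulOpposite.smul_eq_mul_unop, smul_eq_mul] using this
    rcases h e.fst hfst with h0 | h1
    · left
      have hs : e.snd = 0 := by
        rw [h0] at hsnd; simpa using hsnd.symm
      exact TrivSqZeroExt.ext (by simpa using h0) (by simpa using hs)
    · right
      have hs : e.snd = 0 := by
        rw [h1] at hsnd
        have h2 : e.snd + e.snd = e.snd := by simpa using hsnd
        exact add_eq_right.mp h2
      exact TrivSqZeroExt.ext (by simpa using h1) (by simpa using hs)
  refine ⟨H, ?_⟩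
  intro a b hab habne
  rcases H (a * b) hab with h0 | h1
  · exact absurd h0 habne
  · show b * a * (b * a) = b * a
    calc b * a * (b * a) = b * (a * b) * a := by noncomm_ring
    _ = b * a := by rw [h1, mul_one]
end

section
/- If R is an abelian ring, then every idempotent of the trivial extension T(R,R) is of the form (a, 0) where a is an idempotent of R. -/
/-- If `R` is an abelian ring (all idempotents are central), then every idempotent of the
trivial extension `T(R,R)` is of the form `(a, 0)` with `a` an idempotent of `R`. -/
theorem idempotent_trivSqZeroExt_of_abelian (R : Type*) [Ring R]
    (habelian : ∀ e : R, IsIdempotentElem e → ∀ r : R, e * r = r * e) :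
    ∀ α : TrivSqZeroExt R R, IsIdempotentElem α →
      ∃ a : R, IsIdempotentElem a ∧ α = TrivSqZeroExt.inl a := by
  intro α hα
  set a := α.fst with ha
  set m := α.snd with hm
  have hfst : a * a = a := by
    have := congrArg TrivSqZeroExt.fst hα
    simpa [TrivSqZeroExt.fst_mul] using this
  have hsnd : a * m + m * a = m := by
    have := congrArg TrivSqZeroExt.snd hα
    simpa [TrivSqZeroExt.snd_mul, smul_eq_mul, MulOpposite.smul_eq_mul_unop] using this
  have hcomm := habelian a hfst
  have h2 : a * m + a * m = m := by rw [← hcomm m] at hsnd; exact hsnd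
  have h3 : a * m = 0 := by
    have h := congrArg (fun x => a * x) h2
    simp only [mul_add, ← mul_assoc, hfst] at h
    have := add_right_cancel (a := a * m) (b := a * m) (c := 0) (by simpa using h)
    exact this
  have hm0 : m = 0 := by rw [← h2, h3, add_zero]
  exact ⟨a, hfst, TrivSqZeroExt.ext rfl (by simpa using hm0)⟩
end

section
/- For a ring R and integer n ≥ 3, the ring D_n(R) of upper triangular n×n matrices with constant diagonal is i-reversible if and only if R has only trivial idempotents. -/
/-- Upper triangular predicate for square matrices. -/
def Matrix.IsUpperTri {n : ℕ} {R : Type*} [Zero R] (A : Matrix (Fin n) (Fin n) R) : Prop :=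
  ∀ ⦃i j : Fin n⦄, j < i → A i j = 0

lemma Matrix.IsUpperTri.mul {n : ℕ} {R : Type*} [Ring R]
    {A B : Matrix (Fin n) (Fin n) R} (hA : A.IsUpperTri) (hB : B.IsUpperTri) :
    (A * B).IsUpperTri := by
  intro i j h
  rw [Matrix.mul_apply]
  refine Finset.sum_eq_zero fun k _ => ?_
  rcases lt_or_ge k i with hk | hk
  · rw [hA hk, zero_mul]
  · rw [hB (lt_of_lt_of_le h hk), mul_zero]

/-- The ring `T_n(R)` of upper triangular `n × n` matrices, as a subring of the matrix ring. -/
def triangularRing (n : ℕ) (R : Type*) [Ring R] :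
    Subring (Matrix (Fin n) (Fin n) R) where
  carrier := {A | A.IsUpperTri}
  mul_mem' ha hb := ha.mul hb
  one_mem' := fun i j h => by simp [Matrix.one_apply, (ne_of_lt h).symm]
  add_mem' ha hb := fun i j h => by simp [Matrix.add_apply, ha h, hb h]
  zero_mem' := fun i j h => rfl
  neg_mem' ha := fun i j h => by simp [ha h]

lemma diag_mul_upperTri {n : ℕ} {R : Type*} [Ring R]
    {A B : Matrix (Fin n) (Fin n) R} (hA : A.IsUpperTri)
    (hB : B.IsUpperTri) (i : Fin n) : (A * B) i i = A i i * B i i := by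
  rw [Matrix.mul_apply]
  refine Finset.sum_eq_single i (fun k _ hk => ?_) (by simp)
  rcases lt_or_gt_of_ne hk with h | h
  · rw [hA h, zero_mul]
  · rw [hB h, mul_zero]

/-- The ring `D_n(R)` of upper triangular `n × n` matrices with constant diagonal. -/
def constDiagRing (n : ℕ) (R : Type*) [Ring R] :
    Subring (Matrix (Fin n) (Fin n) R) where
  carrier := {A | A.IsUpperTri ∧ ∀ i j : Fin n, A i i = A j j}
  mul_mem' := by
    rintro A B ⟨hA, hA'⟩ ⟨hB, hB'⟩
    refine ⟨hA.mul hB, fun i j => ?_⟩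
    rw [diag_mul_upperTri hA hB, diag_mul_upperTri hA hB, hA' i j, hB' i j]
  one_mem' := ⟨fun i j h => by simp [Matrix.one_apply, (ne_of_lt h).symm], by simp⟩
  add_mem' := by
    rintro A B ⟨hA, hA'⟩ ⟨hB, hB'⟩
    exact ⟨fun i j h => by simp [Matrix.add_apply, hA h, hB h],
      fun i j => by simp [Matrix.add_apply, hA' i j, hB' i j]⟩
  zero_mem' := ⟨fun i j h => rfl, by simp⟩
  neg_mem' := by
    rintro A ⟨hA, hA'⟩
    exact ⟨fun i j h => by simp [hA h], fun i j => by simp [hA' i j]⟩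

/-!
Evaluating the constant diagonal is a ring map `D_n(R) → R` whose kernel consists of strictly
upper triangular, hence nilpotent, matrices. Nilpotent idempotents vanish, so an idempotent of
`D_n(R)` lying over `0` is `0`, and one lying over `1` is `1`: if `R` has only trivial
idempotents, so does `D_n(R)`. In such a ring a non-zero idempotent `ab` equals `1`, and then
`(ba)^2 = b(ab)a = ba`.

Conversely, let `e` be a non-trivial idempotent of `R` and `f = 1 - e`, so that `ef = fe = 0`.
For indices `i < j < k`, `a = e + f E_{jk}` and `b = e + f E_{ij}` give `ab = e`, a non-zero
idempotent, while `ba = e + f E_{ik}` has square `e ≠ ba`.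
-/

theorem HasOnlyTrivialIdempotents.of_ringHom_of_isNilpotent {S T : Type*} [Ring S] [Ring T]
    (φ : S →+* T) (hφ : ∀ x, φ x = 0 → IsNilpotent x) (hT : HasOnlyTrivialIdempotents T) :
    HasOnlyTrivialIdempotents S := by
  intro e he
  rcases hT (φ e) (he.map φ) with h | h
  · exact .inl (he.eq_zero_of_isNilpotent (hφ e h))
  · refine .inr (sub_eq_zero.mp (he.one_sub.eq_zero_of_isNilpotent (hφ _ ?_))).symm
    rw [map_sub, map_one, h, sub_self]

theorem IsIReversible.of_hasOnlyTrivialIdempotents {S : Type*} [Ring S]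
    (hS : HasOnlyTrivialIdempotents S) : IsIReversible S := by
  intro a b hab hab0
  obtain h | h := hS _ hab
  · exact absurd h hab0
  · rw [IsIdempotentElem, mul_assoc, ← mul_assoc a, h, one_mul]

namespace Matrix.IsUpperTri

variable {n : ℕ} {R : Type*} [Ring R] {N : Matrix (Fin n) (Fin n) R}

theorem pow_apply_eq_zero_of_diag_eq_zero (hN : N.IsUpperTri) (hdiag : ∀ i, N i i = 0)
    (k : ℕ) {i j : Fin n} (hij : (j : ℕ) < i + k) : (N ^ k) i j = 0 := by
  induction k generalizing j with
  | zero => exact one_apply_ne (by rintro rfl; omega)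
  | succ k ih =>
    rw [pow_succ, mul_apply]
    refine Finset.sum_eq_zero fun l _ => ?_
    rcases lt_or_ge (l : ℕ) (i + k) with hl | hl
    · rw [ih hl, zero_mul]
    · rcases eq_or_lt_of_le (show (j : ℕ) ≤ l by omega) with hjl | hjl
      · rw [Fin.ext hjl, hdiag, mul_zero]
      · rw [hN (show j < l from hjl), mul_zero]

theorem pow_eq_zero_of_diag_eq_zero (hN : N.IsUpperTri) (hdiag : ∀ i, N i i = 0) :
    N ^ n = 0 := by
  ext i j
  exact hN.pow_apply_eq_zero_of_diag_eq_zero hdiag n (by omega)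

end Matrix.IsUpperTri

theorem Matrix.scalar_add_single_mul_scalar_add_single {m R : Type*} [Fintype m] [DecidableEq m]
    [Ring R] {e f : R} (he : IsIdempotentElem e) (hef : e * f = 0) (hfe : f * e = 0)
    (i j k l : m) :
    (scalar m e + single i j f) * (scalar m e + single k l f) =
      scalar m e + single i j f * single k l f := by
  rw [add_mul, mul_add, mul_add, ← map_mul, he.eq]
  simp [← smul_eq_diagonal_mul, ← op_smul_eq_mul_diagonal, hef, hfe]

namespace constDiagRing

open Matrix

variable {n : ℕ} {R : Type*} [Ring R]

theorem scalar_mem (e : R) : scalar (Fin n) e ∈ constDiagRing n R :=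
  ⟨fun _ _ h => diagonal_apply_ne _ h.ne', fun _ _ => by simp⟩

theorem single_mem {i j : Fin n} (hij : i < j) (c : R) : single i j c ∈ constDiagRing n R := by
  have hdiag (k : Fin n) : single i j c k k = 0 :=
    single_apply_of_ne _ _ _ _ _ (by rintro ⟨rfl, rfl⟩; exact hij.ne rfl)
  refine ⟨fun k l hlk => single_apply_of_ne _ _ _ _ _ ?_, fun k l => by rw [hdiag, hdiag]⟩
  rintro ⟨rfl, rfl⟩
  exact hlk.not_gt hij

def diagEntry (i : Fin n) : constDiagRing n R →+* R where
  toFun A := (A : Matrix (Fin n) (Fin n) R) i i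
  map_one' := one_apply_eq i
  map_mul' A B := diag_mul_upperTri A.2.1 B.2.1 i
  map_zero' := rfl
  map_add' _ _ := rfl

theorem isNilpotent_of_diagEntry_eq_zero {i : Fin n} {A : constDiagRing n R}
    (hA : diagEntry i A = 0) : IsNilpotent A := by
  refine ⟨n, Subtype.ext ?_⟩
  rw [SubmonoidClass.coe_pow]
  exact A.2.1.pow_eq_zero_of_diag_eq_zero fun j => (A.2.2 j i).trans hA

theorem hasOnlyTrivialIdempotents (hR : HasOnlyTrivialIdempotents R) (i : Fin n) :
    HasOnlyTrivialIdempotents (constDiagRing n R) :=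
  .of_ringHom_of_isNilpotent (diagEntry i) (fun _ => isNilpotent_of_diagEntry_eq_zero) hR

theorem hasOnlyTrivialIdempotents_of_isIReversible {i j k : Fin n} (hij : i < j) (hjk : j < k)
    (h : IsIReversible (constDiagRing n R)) : HasOnlyTrivialIdempotents R := by
  intro e he
  by_contra! ⟨he0, he1⟩
  have hf0 : 1 - e ≠ 0 := sub_ne_zero.mpr he1.symm
  have hmul := scalar_add_single_mul_scalar_add_single (m := Fin n) he he.mul_one_sub_self
    he.one_sub_mul_self
  let a : constDiagRing n R := ⟨_, add_mem (scalar_mem e) (single_mem hjk (1 - e))⟩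
  let b : constDiagRing n R := ⟨_, add_mem (scalar_mem e) (single_mem hij (1 - e))⟩
  have hab : a * b = ⟨_, scalar_mem e⟩ := Subtype.ext <| (hmul j k i j).trans <| by
    rw [single_mul_single_of_ne (h := (hij.trans hjk).ne'), add_zero]
  have hba : ((b * a : constDiagRing n R) : Matrix (Fin n) (Fin n) R) =
      scalar (Fin n) e + single i k (1 - e) :=
    (hmul i j j k).trans <| by rw [single_mul_single_same, he.one_sub.eq]
  have hidem : IsIdempotentElem (a * b) := by
    rw [hab]
    exact Subtype.ext <| (map_mul (scalar (Fin n)) e e).symm.trans (by rw [he.eq])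
  have hab0 : a * b ≠ 0 := by
    rw [hab, Ne, Subtype.ext_iff]
    exact fun h0 => he0 <| by simpa using congrFun (congrFun h0 i) i
  have hba_idem := (h a b hidem hab0).map (constDiagRing n R).subtype
  rw [Subring.subtype_apply, IsIdempotentElem, hba, hmul, single_mul_single_of_ne (h :=
    (hij.trans hjk).ne'), add_zero, left_eq_add] at hba_idem
  exact hf0 <| by simpa using congrFun (congrFun hba_idem i) k

end constDiagRing

/-- For `n ≥ 3`, the ring `D_n(R)` is i-reversible if and only if `R` has only trivial
idempotents. -/
theorem constDiagRing_isIReversible_iff (R : Type*) [Ring R] (n : ℕ) (hn : 3 ≤ n) :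
    IsIReversible (constDiagRing n R) ↔ HasOnlyTrivialIdempotents R := by
  constructor
  · exact constDiagRing.hasOnlyTrivialIdempotents_of_isIReversible
      (i := ⟨0, by omega⟩) (j := ⟨1, by omega⟩) (k := ⟨2, by omega⟩) (by simp) (by simp)
  · exact fun hR =>
      .of_hasOnlyTrivialIdempotents (constDiagRing.hasOnlyTrivialIdempotents hR ⟨0, by omega⟩)
end

section
/- If R has only trivial idempotents and n ≥ 3, then the ring D_n(R) of upper triangular matrices with constant diagonal has only trivial idempotents (its only idempotents are 0 and the identity matrix). -/
theorem HasOnlyTrivialIdempotents.of_ker_isNilpotent {S T : Type*} [Ring S] [Ring T]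
    (f : S →+* T) (hf : ∀ x ∈ RingHom.ker f, IsNilpotent x)
    (hT : HasOnlyTrivialIdempotents T) :
    HasOnlyTrivialIdempotents S := by
  intro e he
  rcases hT (f e) (he.map f) with hfe | hfe
  · exact .inl (he.eq_zero_of_isNilpotent (hf e hfe))
  · have hker : 1 - e ∈ RingHom.ker f := by rw [RingHom.mem_ker, map_sub, map_one, hfe, sub_self]
    exact .inr (sub_eq_zero.mp (he.one_sub.eq_zero_of_isNilpotent (hf _ hker))).symm

namespace Matrix

variable {n : ℕ} {R : Type*} [Semiring R]

theorem pow_apply_eq_zero_of_lt_add {A : Matrix (Fin n) (Fin n) R}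
    (hA : ∀ i j : Fin n, (j : ℕ) ≤ i → A i j = 0) (k : ℕ) {i j : Fin n}
    (hij : (j : ℕ) < i + k) : (A ^ k) i j = 0 := by
  induction k generalizing i with
  | zero => exact one_apply_ne (by rintro rfl; omega)
  | succ k ih =>
    rw [pow_succ', mul_apply]
    refine Finset.sum_eq_zero fun l _ => ?_
    rcases le_or_gt (l : ℕ) i with hl | hl
    · rw [hA i l hl, zero_mul]
    · rw [ih (by omega), mul_zero]

theorem isNilpotent_of_forall_le_eq_zero {A : Matrix (Fin n) (Fin n) R}
    (hA : ∀ i j : Fin n, (j : ℕ) ≤ i → A i j = 0) : IsNilpotent A :=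
  ⟨n, ext fun i j => pow_apply_eq_zero_of_lt_add hA n (by omega)⟩

end Matrix

namespace constDiagRing

variable {n : ℕ} {R : Type*} [Ring R]

def diagHom (i : Fin n) : constDiagRing n R →+* R where
  toFun A := (A : Matrix (Fin n) (Fin n) R) i i
  map_one' := Matrix.one_apply_eq i
  map_mul' A B := diag_mul_upperTri A.2.1 B.2.1 i
  map_zero' := rfl
  map_add' _ _ := rfl

theorem isNilpotent_of_mem_ker_diagHom (i : Fin n) {A : constDiagRing n R}
    (hA : A ∈ RingHom.ker (diagHom i)) : IsNilpotent A := by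
  rcases A with ⟨A, hAut, hAdiag⟩
  have hAii : A i i = 0 := hA
  have hstrict : ∀ k l : Fin n, (l : ℕ) ≤ k → A k l = 0 := fun k l hlk =>
    (eq_or_lt_of_le hlk).elim (fun h => by rw [Fin.ext h, hAdiag k i, hAii]) (fun h => hAut h)
  exact (IsNilpotent.map_iff (Subring.subtype_injective _)).mp
    (Matrix.isNilpotent_of_forall_le_eq_zero hstrict)

end constDiagRing

theorem constDiagRing_hasOnlyTrivialIdempotents_general (R : Type*) [Ring R] (n : ℕ)
    (h : HasOnlyTrivialIdempotents R) :
    HasOnlyTrivialIdempotents (constDiagRing n R) := by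
  cases n with
  | zero => exact fun e _ => .inl (Subsingleton.elim e 0)
  | succ n =>
    exact HasOnlyTrivialIdempotents.of_ker_isNilpotent (constDiagRing.diagHom 0)
      (fun _ => constDiagRing.isNilpotent_of_mem_ker_diagHom 0) h

/-- If `R` has only trivial idempotents and `n ≥ 3`, then `D_n(R)` has only trivial
idempotents. -/
theorem constDiagRing_hasOnlyTrivialIdempotents (R : Type*) [Ring R] (n : ℕ) (hn : 3 ≤ n)
    (h : HasOnlyTrivialIdempotents R) :
    HasOnlyTrivialIdempotents (constDiagRing n R) :=
  constDiagRing_hasOnlyTrivialIdempotents_general R n h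
end

section
/- Let R be any ring, n ≥ 5, and let S be a subring of T_n(R) strictly containing D_n(R). If S contains a non-trivial idempotent, then S is not i-reversible. -/
namespace Matrix

variable {n R : Type*} [Fintype n] [DecidableEq n] [Ring R]

theorem mul_single_mul_apply (M N : Matrix n n R) (a b : n) (c : R) (p q : n) :
    (M * single a b c * N) p q = M p a * c * N b q := by
  simp [mul_apply, single, ite_and]

end Matrix

theorem IsIReversible.one_sub_mul_eq_zero {S : Type*} [Ring S] (hS : IsIReversible S)
    {f w z : S} (hf : IsIdempotentElem f) (hf0 : f ≠ 0) (hzw : z * (1 - f) * w = 0) :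
    (1 - f) * w * (1 - f) * z * (1 - f) = 0 := by
  set g := 1 - f
  have hfg : f * g = 0 := by simp [g, mul_sub, hf.eq]
  have hgf : g * f = 0 := by simp [g, sub_mul, hf.eq]
  have hgg : g * g = g := hf.one_sub.eq
  set a := f + z * g
  set b := f + g * w
  have hab : a * b = f := by
    calc a * b = f * f + f * g * w + z * (g * f) + z * (g * g) * w := by
          simp only [a, b]; noncomm_ring
      _ = f := by rw [hf.eq, hfg, hgf, hgg, hzw]; simp
  have hba : IsIdempotentElem (b * a) := hS a b (hab ▸ hf) (hab ▸ hf0)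
  calc g * w * g * z * g
        = f * g * f + f * g * (z * g) + g * w * (g * f) + g * w * g * z * g := by
        rw [hfg, hgf]; simp
    _ = b * g * a := by simp only [a, b]; noncomm_ring
    _ = b * a - b * (a * b) * a := by rw [hab]; simp only [g]; noncomm_ring
    _ = 0 := by rw [← mul_assoc b a b, mul_assoc (b * a) b a, hba.eq, sub_self]

section Chains

variable {R : Type*} [Ring R] {N : ℕ}

/-- `KillsChains x p s a` says that `a * r₁ * x i₁ * r₂ * x i₂ * ⋯ * rₚ * x iₚ = 0` for all
`s ≤ i₁ < i₂ < ⋯ < iₚ` and all `rₖ : R`. -/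
def KillsChains (x : Fin N → R) : ℕ → ℕ → R → Prop
  | 0, _, a => a = 0
  | p + 1, s, a => ∀ i : Fin N, s ≤ i → ∀ r, KillsChains x p (i + 1) (a * r * x i)

variable {x : Fin N → R}

theorem KillsChains.mono : ∀ {p s t : ℕ} {a : R}, s ≤ t →
    KillsChains x p s a → KillsChains x p t a
  | 0, _, _, _, _, h => h
  | _ + 1, _, _, _, hst, h => fun i hi r => h i (hst.trans hi) r

theorem KillsChains.mul_right : ∀ {p s : ℕ} {a : R} (c : R),
    KillsChains x p s a → KillsChains x p s (a * c)
  | 0, _, _, c, h => by simp only [KillsChains] at h ⊢; rw [h, zero_mul]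
  | _ + 1, _, a, c, h => fun i hi r => by simpa only [mul_assoc] using h i hi (c * r)

theorem eq_zero_of_killsChains {y : Fin N → R} (hxy : ∀ i, x i + y i = 1) :
    ∀ {p q s : ℕ} {a : R}, s + p + q ≤ N + 1 →
      KillsChains x p s a → KillsChains y q s a → a = 0
  | 0, _, _, _, _, hx, _ => hx
  | _, 0, _, _, _, _, hy => hy
  | p + 1, q + 1, s, a, hN, hx, hy => by
    let i : Fin N := ⟨s, by omega⟩
    have hax : a * x i = 0 := eq_zero_of_killsChains hxy (p := p) (q := q + 1) (by omega)
      (by simpa using hx i le_rfl 1) ((hy.mul_right _).mono (Nat.le_succ s))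
    have hay : a * y i = 0 := eq_zero_of_killsChains hxy (p := p + 1) (q := q) (by omega)
      ((hx.mul_right _).mono (Nat.le_succ s)) (by simpa using hy i le_rfl 1)
    rw [← mul_one a, ← hxy i, mul_add, hax, hay, add_zero]

end Chains

section Triangular

variable {n : ℕ} {R : Type*} [Ring R]

theorem Matrix.single_mem_constDiagRing {i j : Fin n} (h : i < j) (c : R) :
    Matrix.single i j c ∈ constDiagRing n R := by
  refine ⟨fun p q hqp => ?_, fun p q => ?_⟩
  · apply Matrix.single_apply_of_ne
    rintro ⟨rfl, rfl⟩
    exact absurd h (not_lt.2 hqp.le)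
  · rw [Matrix.single_apply_of_ne, Matrix.single_apply_of_ne] <;>
      rintro ⟨rfl, rfl⟩ <;> exact h.ne rfl

theorem killsChains_diag_one_sub {S : Subring (Matrix (Fin n) (Fin n) R)}
    (hST : S ≤ triangularRing n R) (hDS : constDiagRing n R ≤ S) (hS : IsIReversible S)
    {f : Matrix (Fin n) (Fin n) R} (hfS : f ∈ S) (hf : IsIdempotentElem f) (hf0 : f ≠ 0) :
    KillsChains (fun i => (1 - f) i i) 3 0 1 := by
  intro i _ r₁ j hij r₂ k hjk r₃
  replace hij : i < j := by rw [Fin.lt_def]; omega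
  replace hjk : j < k := by rw [Fin.lt_def]; omega
  let w : S := ⟨Matrix.single i j r₂, hDS (Matrix.single_mem_constDiagRing hij r₂)⟩
  let z : S := ⟨Matrix.single j k r₃, hDS (Matrix.single_mem_constDiagRing hjk r₃)⟩
  have hzw : z * (1 - ⟨f, hfS⟩) * w = 0 := by
    ext : 1
    simp [z, w, hST hfS (hij.trans hjk), (hij.trans hjk).ne']
  have h := congr_arg (fun M : S => (M : Matrix (Fin n) (Fin n) R) i k)
    (hS.one_sub_mul_eq_zero (f := ⟨f, hfS⟩) (Subtype.ext hf.eq)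
      (Subtype.ext_iff.not.mpr hf0) hzw)
  simp only [KillsChains]
  push_cast [w, z] at h
  rw [Matrix.mul_single_mul_apply, Matrix.mul_single_mul_apply, Matrix.zero_apply] at h
  simp only [one_mul, mul_assoc] at h ⊢
  rw [h, mul_zero]

end Triangular

/-- For `n ≥ 5`, if `S` is a subring of `T_n(R)` strictly containing `D_n(R)` and `S`
contains a non-trivial idempotent, then `S` is not i-reversible. -/
theorem not_isIReversible_of_nontrivial_idempotent (R : Type*) [Ring R] (n : ℕ) (hn : 5 ≤ n)
    (S : Subring (Matrix (Fin n) (Fin n) R)) (hST : S ≤ triangularRing n R)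
    (hDS : constDiagRing n R < S)
    (e : Matrix (Fin n) (Fin n) R) (heS : e ∈ S) (he : IsIdempotentElem e)
    (he0 : e ≠ 0) (he1 : e ≠ 1) :
    ¬ IsIReversible S := by
  intro hS
  have hx : KillsChains (fun i => e i i) 3 0 1 := by
    simpa using killsChains_diag_one_sub hST hDS.le hS (sub_mem (one_mem S) heS) he.one_sub
      (sub_ne_zero.mpr he1.symm)
  have hy : KillsChains (fun i => (1 - e) i i) 3 0 1 :=
    killsChains_diag_one_sub hST hDS.le hS heS he he0
  have h10 : (1 : R) = 0 := eq_zero_of_killsChains (fun i => by simp) (by omega) hx hy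
  have : Subsingleton R := subsingleton_of_zero_eq_one h10.symm
  exact he0 (Subsingleton.elim _ _)
end

section
/- Let F be a field and n ≥ 3. Every subring of T_n(F) that strictly contains D_n(F) contains a non-trivial idempotent. -/
open Polynomial Matrix

theorem Matrix.IsUpperTri.sub_diagonal_diag_mem_constDiagRing {n : ℕ} {R : Type*} [Ring R]
    {A : Matrix (Fin n) (Fin n) R} (hA : A.IsUpperTri) :
    A - diagonal A.diag ∈ constDiagRing n R :=
  ⟨fun i j hij => by simp [hA hij, diagonal_apply_ne _ hij.ne'], fun i j => by simp⟩

theorem algebraMap_mem_constDiagRing {n : ℕ} {R : Type*} [CommRing R] (c : R) :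
    algebraMap R (Matrix (Fin n) (Fin n) R) c ∈ constDiagRing n R :=
  ⟨fun i j hij => by simp [algebraMap_eq_diagonal, diagonal_apply_ne _ hij.ne'],
    fun i j => by simp [algebraMap_eq_diagonal]⟩

theorem Subring.aeval_mem {R A : Type*} [CommRing R] [Ring A] [Algebra R A] {S : Subring A}
    (hS : Set.range (algebraMap R A) ⊆ S) {x : A} (hx : x ∈ S) (p : R[X]) : aeval x p ∈ S := by
  have hadjoin : (Algebra.adjoin R {x}).toSubring ≤ S := by
    rw [Algebra.adjoin_eq_ring_closure, Subring.closure_le]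
    exact Set.union_subset hS (Set.singleton_subset_iff.mpr hx)
  exact hadjoin (aeval_mem_adjoin_singleton R x)

theorem Matrix.aeval_diagonal {ι R : Type*} [Fintype ι] [DecidableEq ι] [CommRing R]
    (d : ι → R) (p : R[X]) : aeval (diagonal d) p = diagonal fun k => p.eval (d k) := by
  rw [← diagonalAlgHom_apply (R := R), aeval_algHom_apply, aeval_pi_apply]
  simp

theorem Polynomial.exists_eval_eq_ite {ι F : Type*} [Fintype ι] [Field F] [DecidableEq F]
    (d : ι → F) (i : ι) : ∃ p : F[X], ∀ k, p.eval (d k) = if d k = d i then 1 else 0 := by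
  have hmem : ∀ k, d k ∈ Finset.univ.image d := fun k => Finset.mem_image_of_mem d (by simp)
  refine ⟨Lagrange.basis (Finset.univ.image d) id (d i), fun k => ?_⟩
  split_ifs with h
  · simpa [h] using Lagrange.eval_basis_self (Set.injOn_id _) (hmem i)
  · simpa using Lagrange.eval_basis_of_ne (v := id) (Ne.symm h) (hmem k)

theorem Matrix.isIdempotentElem_diagonal_ite {ι R : Type*} [Fintype ι] [DecidableEq ι]
    [Semiring R] (P : ι → Prop) [DecidablePred P] :
    IsIdempotentElem (diagonal fun k => if P k then (1 : R) else 0) := by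
  rw [IsIdempotentElem, diagonal_mul_diagonal]
  congr 1
  ext k
  split_ifs <;> simp

theorem exists_nontrivial_idempotent_of_diagonal_mem {ι F : Type*} [Fintype ι] [DecidableEq ι]
    [Field F] {S : Subring (Matrix ι ι F)} (hS : Set.range (algebraMap F (Matrix ι ι F)) ⊆ S)
    {d : ι → F} (hd : diagonal d ∈ S) {i j : ι} (hij : d i ≠ d j) :
    ∃ e ∈ S, IsIdempotentElem e ∧ e ≠ 0 ∧ e ≠ 1 := by
  classical
  obtain ⟨p, hp⟩ := exists_eval_eq_ite d i
  have he : aeval (diagonal d) p = diagonal fun k => if d k = d i then 1 else 0 := by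
    simp only [aeval_diagonal, hp]
  refine ⟨_, S.aeval_mem hS hd p, he ▸ isIdempotentElem_diagonal_ite _, fun h => ?_, fun h => ?_⟩
  · simpa [he] using congrFun₂ h i i
  · simpa [he, hij.symm] using congrFun₂ h j j

theorem exists_nontrivial_idempotent_of_gt_constDiagRing_general (F : Type*) [Field F] (n : ℕ)
    (S : Subring (Matrix (Fin n) (Fin n) F)) (hST : S ≤ triangularRing n F)
    (hDS : constDiagRing n F < S) :
    ∃ e ∈ S, IsIdempotentElem e ∧ e ≠ 0 ∧ e ≠ 1 := by
  obtain ⟨A, hAS, hAD⟩ := SetLike.exists_of_lt hDS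
  have hAT : A.IsUpperTri := hST hAS
  obtain ⟨i, j, hij⟩ : ∃ i j, A i i ≠ A j j := by
    by_contra! h
    exact hAD ⟨hAT, h⟩
  have hdiag : diagonal A.diag ∈ S := by
    simpa using S.sub_mem hAS (hDS.le hAT.sub_diagonal_diag_mem_constDiagRing)
  have hscalar : Set.range (algebraMap F (Matrix (Fin n) (Fin n) F)) ⊆ S := by
    rintro _ ⟨c, rfl⟩
    exact hDS.le (algebraMap_mem_constDiagRing c)
  exact exists_nontrivial_idempotent_of_diagonal_mem hscalar hdiag hij

/-- Over a field `F` and for `n ≥ 3`, every subring of `T_n(F)` strictly containing `D_n(F)`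
contains a non-trivial idempotent. -/
theorem exists_nontrivial_idempotent_of_gt_constDiagRing (F : Type*) [Field F] (n : ℕ)
    (hn : 3 ≤ n) (S : Subring (Matrix (Fin n) (Fin n) F)) (hST : S ≤ triangularRing n F)
    (hDS : constDiagRing n F < S) :
    ∃ e ∈ S, IsIdempotentElem e ∧ e ≠ 0 ∧ e ≠ 1 :=
  exists_nontrivial_idempotent_of_gt_constDiagRing_general F n S hST hDS
end

section
/- Let F be a field and S_3(F) = { (a_{ij}) in T_3(F) : a_{11} = a_{22} }. Then S_3(F) is an i-reversible subring of T_3(F) strictly containing D_3(F). -/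
/-- The ring `S_3(F)` of upper triangular `3 × 3` matrices with equal `(1,1)` and `(2,2)`
entries. -/
def S3Ring (F : Type*) [Ring F] : Subring (Matrix (Fin 3) (Fin 3) F) where
  carrier := {A | A.IsUpperTri ∧ A 0 0 = A 1 1}
  mul_mem' := by
    rintro A B ⟨hA, hA'⟩ ⟨hB, hB'⟩
    refine ⟨hA.mul hB, ?_⟩
    rw [diag_mul_upperTri hA hB, diag_mul_upperTri hA hB, hA', hB']
  one_mem' := ⟨fun i j h => by simp [Matrix.one_apply, (ne_of_lt h).symm], by simp⟩
  add_mem' := by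
    rintro A B ⟨hA, hA'⟩ ⟨hB, hB'⟩
    exact ⟨fun i j h => by simp [Matrix.add_apply, hA h, hB h],
      by simp [Matrix.add_apply, hA', hB']⟩
  zero_mem' := ⟨fun i j h => rfl, rfl⟩
  neg_mem' := by
    rintro A ⟨hA, hA'⟩
    exact ⟨fun i j h => by simp [hA h], by simp [hA']⟩

/-!
Write an element of `S₃(R)`, for a commutative domain `R`, as `[[a, x, y], [0, a, z], [0, 0, b]]`.
The blocks `[[a, x], [0, a]]` multiply like the dual numbers `a + xε`, a commutative ring, so
`AB` and `BA` share `a`, `x` and `b`; in an idempotent, `x = 0` and `a, b ∈ {0, 1}`.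
If `a = b`, an idempotent is `0` or `1`, and `AB = 1` forces `BA = 1`. If `a ≠ b`, then
`a + b = 1`, and every element with `a² = a`, `x = 0` and `a + b = 1` is idempotent,
whatever `y` and `z` are.
-/

lemma IsIdempotentElem.add_eq_one_of_ne {R : Type*} [Ring R] [IsDomain R] {u v : R}
    (hu : IsIdempotentElem u) (hv : IsIdempotentElem v) (huv : u ≠ v) : u + v = 1 := by
  rcases IsIdempotentElem.iff_eq_zero_or_one.1 hu with rfl | rfl <;>
    rcases IsIdempotentElem.iff_eq_zero_or_one.1 hv with rfl | rfl <;> simp_all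

namespace S3Ring

variable {R : Type*} [CommRing R] {A B M : Matrix (Fin 3) (Fin 3) R}

lemma ext_of_apply_eq (hA : A ∈ S3Ring R) (hB : B ∈ S3Ring R) (h00 : A 0 0 = B 0 0)
    (h01 : A 0 1 = B 0 1) (h02 : A 0 2 = B 0 2) (h12 : A 1 2 = B 1 2) (h22 : A 2 2 = B 2 2) :
    A = B := by
  ext i j
  fin_cases i <;> fin_cases j
  all_goals first
    | assumption
    | exact (hA.1 (by decide)).trans (hB.1 (by decide)).symm
    | simpa [← hA.2, ← hB.2] using h00

lemma mul_apply_zero_one_comm (hA : A ∈ S3Ring R) (hB : B ∈ S3Ring R) :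
    (A * B) 0 1 = (B * A) 0 1 := by
  simp only [Matrix.mul_apply, Fin.sum_univ_three, hA.1 (show (1 : Fin 3) < 2 by decide),
    hB.1 (show (1 : Fin 3) < 2 by decide), ← hA.2, ← hB.2]
  ring

lemma mul_apply_diag_comm (hA : A ∈ S3Ring R) (hB : B ∈ S3Ring R) (i : Fin 3) :
    (A * B) i i = (B * A) i i := by
  rw [diag_mul_upperTri hA.1 hB.1, diag_mul_upperTri hB.1 hA.1, mul_comm]

lemma isIdempotentElem_iff (hM : M ∈ S3Ring R) :
    IsIdempotentElem M ↔ M 0 0 * M 0 0 = M 0 0 ∧ 2 * M 0 0 * M 0 1 = M 0 1 ∧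
      M 0 0 * M 0 2 + M 0 1 * M 1 2 + M 0 2 * M 2 2 = M 0 2 ∧
      M 0 0 * M 1 2 + M 1 2 * M 2 2 = M 1 2 ∧ M 2 2 * M 2 2 = M 2 2 := by
  have h10 : M 1 0 = 0 := hM.1 (by decide)
  have h20 : M 2 0 = 0 := hM.1 (by decide)
  have h21 : M 2 1 = 0 := hM.1 (by decide)
  have sq (i j : Fin 3) : (M * M) i j = M i 0 * M 0 j + M i 1 * M 1 j + M i 2 * M 2 j := by
    simp only [Matrix.mul_apply, Fin.sum_univ_three]
  have sq00 : (M * M) 0 0 = M 0 0 * M 0 0 := by rw [sq, h10, h20]; ring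
  have sq01 : (M * M) 0 1 = 2 * M 0 0 * M 0 1 := by rw [sq, h21, ← hM.2]; ring
  have sq02 : (M * M) 0 2 = M 0 0 * M 0 2 + M 0 1 * M 1 2 + M 0 2 * M 2 2 := sq 0 2
  have sq12 : (M * M) 1 2 = M 0 0 * M 1 2 + M 1 2 * M 2 2 := by rw [sq, h10, ← hM.2]; ring
  have sq22 : (M * M) 2 2 = M 2 2 * M 2 2 := by rw [sq, h20, h21]; ring
  refine ⟨fun h => ?_, fun ⟨e00, e01, e02, e12, e22⟩ => ?_⟩
  · rw [← sq00, ← sq01, ← sq02, ← sq12, ← sq22, h.eq]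
    exact ⟨rfl, rfl, rfl, rfl, rfl⟩
  · exact ext_of_apply_eq (mul_mem hM hM) hM (sq00.trans e00) (sq01.trans e01) (sq02.trans e02)
      (sq12.trans e12) (sq22.trans e22)

lemma apply_zero_one_eq_zero_of_isIdempotentElem (hM : M ∈ S3Ring R) (h : IsIdempotentElem M) :
    M 0 1 = 0 := by
  obtain ⟨e00, e01, -⟩ := (isIdempotentElem_iff hM).1 h
  linear_combination (2 * M 0 0 - 1) * e01 - 4 * M 0 1 * e00

lemma isIdempotentElem_of_add_eq_one (hM : M ∈ S3Ring R) (hu : IsIdempotentElem (M 0 0))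
    (hp : M 0 1 = 0) (huv : M 0 0 + M 2 2 = 1) : IsIdempotentElem M := by
  refine (isIdempotentElem_iff hM).2 ⟨hu, ?_, ?_, ?_, ?_⟩
  · linear_combination (2 * M 0 0 - 1) * hp
  · linear_combination M 0 2 * huv + M 1 2 * hp
  · linear_combination M 1 2 * huv
  · linear_combination (M 2 2 - M 0 0) * huv + hu.eq

lemma eq_zero_or_eq_one_of_isIdempotentElem [IsDomain R] (hM : M ∈ S3Ring R)
    (h : IsIdempotentElem M) (hdiag : M 0 0 = M 2 2) : M = 0 ∨ M = 1 := by
  have hp := apply_zero_one_eq_zero_of_isIdempotentElem hM h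
  obtain ⟨e00, -, e02, e12, -⟩ := (isIdempotentElem_iff hM).1 h
  rcases IsIdempotentElem.iff_eq_zero_or_one.1 e00 with hu | hu <;>
    simp only [← hdiag, hp, hu] at e02 e12
  · have hq : M 0 2 = 0 := by linear_combination -e02
    have hr : M 1 2 = 0 := by linear_combination -e12
    left
    exact ext_of_apply_eq hM (zero_mem _) hu hp hq hr (hdiag ▸ hu)
  · have hq : M 0 2 = 0 := by linear_combination e02
    have hr : M 1 2 = 0 := by linear_combination e12
    right
    refine ext_of_apply_eq hM (one_mem _) ?_ ?_ ?_ ?_ ?_ <;> simp [hu, hp, hq, hr, ← hdiag]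

theorem isIReversible [IsDomain R] : IsIReversible (S3Ring R) := by
  rintro ⟨A, hA⟩ ⟨B, hB⟩ hidem hne
  have hAB : A * B ∈ S3Ring R := mul_mem hA hB
  have hBA : B * A ∈ S3Ring R := mul_mem hB hA
  have he : IsIdempotentElem (A * B) := congrArg Subtype.val hidem
  suffices hf : IsIdempotentElem (B * A) from Subtype.ext hf.eq
  obtain ⟨hu, -, -, -, hv⟩ := (isIdempotentElem_iff hAB).1 he
  rcases eq_or_ne ((A * B) 0 0) ((A * B) 2 2) with hdiag | hdiag
  · rcases eq_zero_or_eq_one_of_isIdempotentElem hAB he hdiag with h0 | h1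
    · exact absurd (Subtype.ext h0) hne
    · rw [mul_eq_one_comm.1 h1]
      exact IsIdempotentElem.one
  · have huv : (A * B) 0 0 + (A * B) 2 2 = 1 :=
      IsIdempotentElem.add_eq_one_of_ne hu hv hdiag
    refine isIdempotentElem_of_add_eq_one hBA ?_ ?_ ?_
    · rwa [← mul_apply_diag_comm hA hB]
    · rw [← mul_apply_zero_one_comm hA hB]
      exact apply_zero_one_eq_zero_of_isIdempotentElem hAB he
    · rwa [← mul_apply_diag_comm hA hB, ← mul_apply_diag_comm hA hB]

end S3Ring

lemma constDiagRing_lt_S3Ring (R : Type*) [Ring R] [Nontrivial R] :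
    constDiagRing 3 R < S3Ring R := by
  have hmem : Matrix.diagonal ![0, 0, 1] ∈ S3Ring R :=
    ⟨fun i j hij => Matrix.diagonal_apply_ne _ hij.ne', by simp⟩
  exact SetLike.lt_iff_le_and_exists.2 ⟨fun A hA => ⟨hA.1, hA.2 0 1⟩, _, hmem,
    fun h => by simpa using h.2 0 2⟩

/-- For a field `F`, `S_3(F)` is an i-reversible subring of `T_3(F)` strictly containing
`D_3(F)`. -/
theorem S3Ring_isIReversible (F : Type*) [Field F] :
    IsIReversible (S3Ring F) ∧ S3Ring F ≤ triangularRing 3 F ∧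
      constDiagRing 3 F < S3Ring F :=
  ⟨S3Ring.isIReversible, fun _ hA => hA.1, constDiagRing_lt_S3Ring F⟩
end

section
/- Let F be a field and S_4(F) = { (a_{ij}) in T_4(F) : a_{11} = a_{22} and a_{33} = a_{44} }. Then S_4(F) is an i-reversible subring of T_4(F). -/
/-- The ring `S_4(F)` of upper triangular `4 × 4` matrices with `a_{11} = a_{22}` and
`a_{33} = a_{44}`. -/
def S4Ring (F : Type*) [Ring F] : Subring (Matrix (Fin 4) (Fin 4) F) where
  carrier := {A | A.IsUpperTri ∧ A 0 0 = A 1 1 ∧ A 2 2 = A 3 3}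
  mul_mem' := by
    rintro A B ⟨hA, hA1, hA2⟩ ⟨hB, hB1, hB2⟩
    refine ⟨hA.mul hB, ?_, ?_⟩
    · rw [diag_mul_upperTri hA hB, diag_mul_upperTri hA hB, hA1, hB1]
    · rw [diag_mul_upperTri hA hB, diag_mul_upperTri hA hB, hA2, hB2]
  one_mem' := ⟨fun i j h => by simp [Matrix.one_apply, (ne_of_lt h).symm], by simp, by simp⟩
  add_mem' := by
    rintro A B ⟨hA, hA1, hA2⟩ ⟨hB, hB1, hB2⟩
    exact ⟨fun i j h => by simp [Matrix.add_apply, hA h, hB h],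
      by simp [Matrix.add_apply, hA1, hB1], by simp [Matrix.add_apply, hA2, hB2]⟩
  zero_mem' := ⟨fun i j h => rfl, rfl, rfl⟩
  neg_mem' := by
    rintro A ⟨hA, hA1, hA2⟩
    exact ⟨fun i j h => by simp [hA h], by simp [hA1], by simp [hA2]⟩

/-! Sending a matrix of `S_4(R)` to its two diagonal `2 × 2` blocks is multiplicative with
commutative target, so `AB` and `BA` agree on the diagonal and at the entries `(0,1)` and `(2,3)`.
An idempotent `AB` has diagonal `(d,d,e,e)` with `d, e ∈ {0,1}` and vanishing `(0,1)`, `(2,3)`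
entries. If `d = e`, then `AB` is `0` or `1`, since an upper triangular idempotent with zero
diagonal vanishes; and `AB = 1` forces `BA = 1`. If `d ≠ e`, every matrix of `S_4(R)` with these
diagonal blocks is idempotent, in particular `BA`. -/

namespace Matrix.IsUpperTri

variable {n : ℕ} {R : Type*} {A B : Matrix (Fin n) (Fin n) R}

theorem isIdempotentElem_apply_self [Ring R] (hA : A.IsUpperTri) (he : IsIdempotentElem A)
    (i : Fin n) : IsIdempotentElem (A i i) := by
  show A i i * A i i = A i i
  rw [← diag_mul_upperTri hA hA, he]

theorem mul_apply_self_comm [CommRing R] (hA : A.IsUpperTri) (hB : B.IsUpperTri) (i : Fin n) :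
    (A * B) i i = (B * A) i i := by
  rw [diag_mul_upperTri hA hB, diag_mul_upperTri hB hA, mul_comm]

theorem eq_zero_of_isIdempotentElem [Ring R] (hA : A.IsUpperTri) (he : IsIdempotentElem A)
    (hdiag : ∀ i, A i i = 0) : A = 0 := by
  suffices h : ∀ j i, A i j = 0 from ext fun i j => h j i
  intro j
  induction j using WellFoundedLT.induction with
  | _ j ih =>
    intro i
    rw [← he, mul_apply]
    refine Finset.sum_eq_zero fun k _ => ?_
    rcases lt_trichotomy k j with hk | rfl | hk
    · rw [ih k hk i, zero_mul]
    · rw [hdiag, mul_zero]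
    · rw [hA hk, mul_zero]

theorem eq_one_of_isIdempotentElem [Ring R] (hA : A.IsUpperTri) (he : IsIdempotentElem A)
    (hdiag : ∀ i, A i i = 1) : A = 1 := by
  have h1A : (1 - A).IsUpperTri := (triangularRing n R).sub_mem (triangularRing n R).one_mem hA
  refine (sub_eq_zero.mp (h1A.eq_zero_of_isIdempotentElem he.one_sub fun i => ?_)).symm
  rw [sub_apply, one_apply_eq, hdiag, sub_self]

end Matrix.IsUpperTri

theorem IsIdempotentElem.eq_zero_of_mul_add_mul_eq_self {R : Type*} [CommRing R] {d x : R}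
    (hd : IsIdempotentElem d) (hx : d * x + x * d = x) : x = 0 := by
  linear_combination (2 * d - 1) * hx - 4 * x * hd.eq

namespace S4Ring

open Matrix

variable {R : Type*} [CommRing R] {A B M : Matrix (Fin 4) (Fin 4) R}

theorem apply_self_eq {c : R} (hM : M ∈ S4Ring R) (h0 : M 0 0 = c) (h2 : M 2 2 = c) (i : Fin 4) :
    M i i = c := by
  obtain ⟨-, h1, h3⟩ := hM
  fin_cases i
  exacts [h0, h1 ▸ h0, h2, h3 ▸ h2]

theorem mul_apply_zero_one_comm (hA : A ∈ S4Ring R) (hB : B ∈ S4Ring R) :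
    (A * B) 0 1 = (B * A) 0 1 := by
  obtain ⟨hA, hA1, -⟩ := hA
  obtain ⟨hB, hB1, -⟩ := hB
  simp only [mul_apply, Fin.sum_univ_four, hA (by decide : (1 : Fin 4) < 2),
    hA (by decide : (1 : Fin 4) < 3), hB (by decide : (1 : Fin 4) < 2),
    hB (by decide : (1 : Fin 4) < 3), mul_zero, add_zero]
  linear_combination B 0 1 * hA1 - A 0 1 * hB1

theorem mul_apply_two_three_comm (hA : A ∈ S4Ring R) (hB : B ∈ S4Ring R) :
    (A * B) 2 3 = (B * A) 2 3 := by
  obtain ⟨hA, -, hA3⟩ := hA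
  obtain ⟨hB, -, hB3⟩ := hB
  simp only [mul_apply, Fin.sum_univ_four, hA (by decide : (0 : Fin 4) < 2),
    hA (by decide : (1 : Fin 4) < 2), hB (by decide : (0 : Fin 4) < 2),
    hB (by decide : (1 : Fin 4) < 2), zero_mul, zero_add]
  linear_combination B 2 3 * hA3 - A 2 3 * hB3

theorem apply_zero_one_eq_zero_of_isIdempotentElem (hM : M ∈ S4Ring R)
    (he : IsIdempotentElem M) : M 0 1 = 0 := by
  obtain ⟨hMt, hM1, -⟩ := hM
  have h := congrFun (congrFun he.eq 0) 1
  simp only [mul_apply, Fin.sum_univ_four, hMt (by decide : (1 : Fin 4) < 2),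
    hMt (by decide : (1 : Fin 4) < 3), mul_zero, add_zero, ← hM1] at h
  exact (hMt.isIdempotentElem_apply_self he 0).eq_zero_of_mul_add_mul_eq_self h

theorem apply_two_three_eq_zero_of_isIdempotentElem (hM : M ∈ S4Ring R)
    (he : IsIdempotentElem M) : M 2 3 = 0 := by
  obtain ⟨hMt, -, hM3⟩ := hM
  have h := congrFun (congrFun he.eq 2) 3
  simp only [mul_apply, Fin.sum_univ_four, hMt (by decide : (0 : Fin 4) < 2),
    hMt (by decide : (1 : Fin 4) < 2), zero_mul, zero_add, ← hM3] at h
  exact (hMt.isIdempotentElem_apply_self he 2).eq_zero_of_mul_add_mul_eq_self h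

theorem isIdempotentElem_of_apply_add_eq_one (hM : M ∈ S4Ring R) (hsum : M 0 0 + M 2 2 = 1)
    (hprod : M 0 0 * M 2 2 = 0) (h01 : M 0 1 = 0) (h23 : M 2 3 = 0) : IsIdempotentElem M := by
  obtain ⟨hMt, hM1, hM3⟩ := hM
  have hz : ∀ ⦃i j : Fin 4⦄, j < i → M i j = 0 := hMt
  ext i j
  fin_cases i <;> fin_cases j <;>
    simp (disch := decide) only [mul_apply, Fin.sum_univ_four, hz, zero_mul, mul_zero,
      add_zero, zero_add] <;>
    grind

theorem isIdempotentElem_mul_swap_of_apply_add_eq_one (hA : A ∈ S4Ring R) (hB : B ∈ S4Ring R)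
    (he : IsIdempotentElem (A * B)) (hsum : (A * B) 0 0 + (A * B) 2 2 = 1)
    (hprod : (A * B) 0 0 * (A * B) 2 2 = 0) : IsIdempotentElem (B * A) := by
  have hAB := (S4Ring R).mul_mem hA hB
  have hdiag := hA.1.mul_apply_self_comm hB.1
  refine isIdempotentElem_of_apply_add_eq_one ((S4Ring R).mul_mem hB hA) ?_ ?_ ?_ ?_
  · rwa [← hdiag, ← hdiag]
  · rwa [← hdiag, ← hdiag]
  · rw [← mul_apply_zero_one_comm hA hB, apply_zero_one_eq_zero_of_isIdempotentElem hAB he]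
  · rw [← mul_apply_two_three_comm hA hB, apply_two_three_eq_zero_of_isIdempotentElem hAB he]

theorem isIdempotentElem_mul_swap (hR : HasOnlyTrivialIdempotents R) (hA : A ∈ S4Ring R)
    (hB : B ∈ S4Ring R) (he : IsIdempotentElem (A * B)) (hne : A * B ≠ 0) :
    IsIdempotentElem (B * A) := by
  have hAB := (S4Ring R).mul_mem hA hB
  rcases hR _ (hAB.1.isIdempotentElem_apply_self he 0) with h0 | h0 <;>
    rcases hR _ (hAB.1.isIdempotentElem_apply_self he 2) with h2 | h2
  · exact absurd (hAB.1.eq_zero_of_isIdempotentElem he (apply_self_eq hAB h0 h2)) hne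
  · exact isIdempotentElem_mul_swap_of_apply_add_eq_one hA hB he
      (by simp [h0, h2]) (by simp [h0, h2])
  · exact isIdempotentElem_mul_swap_of_apply_add_eq_one hA hB he
      (by simp [h0, h2]) (by simp [h0, h2])
  · rw [mul_eq_one_comm.mp (hAB.1.eq_one_of_isIdempotentElem he (apply_self_eq hAB h0 h2))]
    exact .one

end S4Ring

/-- For a field `F`, `S_4(F)` is an i-reversible subring of `T_4(F)`. -/
theorem S4Ring_isIReversible (F : Type*) [Field F] :
    IsIReversible (S4Ring F) ∧ S4Ring F ≤ triangularRing 4 F := by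
  refine ⟨fun A B he hne => ?_, fun A hA => hA.1⟩
  have hF : HasOnlyTrivialIdempotents F := fun e => IsIdempotentElem.iff_eq_zero_or_one.mp
  exact Subtype.ext <| S4Ring.isIdempotentElem_mul_swap hF A.2 B.2 (congrArg Subtype.val he)
    fun h => hne (Subtype.ext h)
end

section
/- Let F be a field. Then S_3(F) = { (a_{ij}) in T_3(F) : a_{11} = a_{22} } is a maximal subring of T_3(F): any subring of T_3(F) strictly containing S_3(F) equals T_3(F). -/
/-!
An upper triangular `A` differs from an element of `S_3` by the single entry
`(A₀₀ - A₁₁) E₀₀`, so `T_3 = S_3 + F E₀₀`. Since `S_3` contains the scalar matrices, every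
subring containing it is an `F`-subspace; an element of `S \ S_3` then yields `E₀₀ ∈ S`.
-/

lemma sub_single_mem_S3Ring {R : Type*} [Ring R] {A : Matrix (Fin 3) (Fin 3) R}
    (hA : A.IsUpperTri) : A - Matrix.single 0 0 (A 0 0 - A 1 1) ∈ S3Ring R := by
  refine ⟨fun i j h => ?_, ?_⟩
  · have hij : ¬(0 = i ∧ 0 = j) := by rintro ⟨rfl, rfl⟩; exact lt_irrefl _ h
    simp [hA h, hij]
  · simp

lemma smul_mem_of_S3Ring_le {R : Type*} [Ring R] {S : Subring (Matrix (Fin 3) (Fin 3) R)}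
    (hS : S3Ring R ≤ S) (c : R) {A : Matrix (Fin 3) (Fin 3) R} (hA : A ∈ S) : c • A ∈ S := by
  have hc : c • (1 : Matrix (Fin 3) (Fin 3) R) ∈ S :=
    hS ⟨fun i j h => by simp [h.ne'], by simp⟩
  simpa using S.mul_mem hc hA

lemma single_zero_zero_mem_of_S3Ring_lt {F : Type*} [Field F]
    {S : Subring (Matrix (Fin 3) (Fin 3) F)} (hST : S ≤ triangularRing 3 F)
    (hS : S3Ring F < S) (c : F) : Matrix.single 0 0 c ∈ S := by
  obtain ⟨B, hBS, hBS3⟩ := SetLike.exists_of_lt hS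
  have hBtri : B.IsUpperTri := hST hBS
  have hd : B 0 0 - B 1 1 ≠ 0 := fun h => hBS3 ⟨hBtri, sub_eq_zero.mp h⟩
  have hdE : Matrix.single 0 0 (B 0 0 - B 1 1) ∈ S := by
    simpa using S.sub_mem hBS (hS.le (sub_single_mem_S3Ring hBtri))
  simpa [Matrix.smul_single, hd] using
    smul_mem_of_S3Ring_le hS.le (c * (B 0 0 - B 1 1)⁻¹) hdE

/-- For a field `F`, `S_3(F)` is a maximal subring of `T_3(F)`: any subring of `T_3(F)`
strictly containing it equals `T_3(F)`. -/
theorem S3Ring_maximal_subring (F : Type*) [Field F]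
    (S : Subring (Matrix (Fin 3) (Fin 3) F)) (hST : S ≤ triangularRing 3 F)
    (hS : S3Ring F < S) : S = triangularRing 3 F := by
  refine le_antisymm hST fun A hA => ?_
  simpa using S.add_mem (hS.le (sub_single_mem_S3Ring hA))
    (single_zero_zero_mem_of_S3Ring_lt hST hS (A 0 0 - A 1 1))
end

section
/- Let R be a ring with a non-trivial central idempotent e. If the trivial extension T(R,R) is i-reversible, then R is reversible. -/
/-- Key lemma: in an i-reversible ring, if `f` is an idempotent different from `1` commuting
with `a` and `b`, and `a * b = 0`, then `b * a * f = 0`. -/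
lemma key_aux {S : Type*} [Ring S] (h : IsIReversible S) (f a b : S)
    (hf : IsIdempotentElem f) (hf1 : f ≠ 1)
    (hfa : f * a = a * f) (hfb : f * b = b * f) (hab : a * b = 0) :
    b * a * f = 0 := by
  have hff : f * f = f := hf
  have hfc : f * (b * a) = b * a * f := by
    rw [← mul_assoc f b, hfb, mul_assoc b f a, hfa, ← mul_assoc, mul_assoc]
  have h4 : (1 - f) * (1 - f) = 1 - f := by
    rw [sub_mul, one_mul, mul_sub, mul_one, hff]; abel
  have hAB : (a * f + (1 - f)) * (b * f + (1 - f)) = 1 - f := by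
    have h1 : a * f * (b * f) = 0 := by
      rw [mul_assoc a f (b * f), ← mul_assoc f b f, hfb, mul_assoc b f f, hff,
        ← mul_assoc a b f, hab, zero_mul]
    have h2 : a * f * (1 - f) = 0 := by
      rw [mul_assoc, mul_sub, mul_one, hff, sub_self, mul_zero]
    have h3 : (1 - f) * (b * f) = 0 := by
      rw [sub_mul, one_mul, ← mul_assoc, hfb, mul_assoc, hff, sub_self]
    rw [add_mul, mul_add, mul_add, h1, h2, h3, h4, zero_add, zero_add, zero_add]
  have hBA : (b * f + (1 - f)) * (a * f + (1 - f)) = b * a * f + (1 - f) := by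
    have h1 : b * f * (a * f) = b * a * f := by
      rw [mul_assoc b f (a * f), ← mul_assoc f a f, hfa, mul_assoc a f f, hff,
        ← mul_assoc b a f]
    have h2 : b * f * (1 - f) = 0 := by
      rw [mul_assoc, mul_sub, mul_one, hff, sub_self, mul_zero]
    have h3 : (1 - f) * (a * f) = 0 := by
      rw [sub_mul, one_mul, ← mul_assoc, hfa, mul_assoc, hff, sub_self]
    rw [add_mul, mul_add, mul_add, h1, h2, h3, h4, add_zero, zero_add]
  have hne : (1 : S) - f ≠ 0 := sub_ne_zero.mpr (fun hc' => hf1 hc'.symm)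
  have hidem : IsIdempotentElem ((a * f + (1 - f)) * (b * f + (1 - f))) := by
    rw [hAB]; exact h4
  have hABne : (a * f + (1 - f)) * (b * f + (1 - f)) ≠ 0 := by rw [hAB]; exact hne
  have hBAidem := h _ _ hidem hABne
  rw [IsIdempotentElem, hBA] at hBAidem
  have hcc : b * a * (b * a) = 0 := by
    rw [mul_assoc b a (b * a), ← mul_assoc a b a, hab, zero_mul, mul_zero]
  have hsq : (b * a * f + (1 - f)) * (b * a * f + (1 - f)) = 1 - f := by
    have h1 : b * a * f * (b * a * f) = 0 := by
      rw [mul_assoc (b * a) f (b * a * f), ← mul_assoc f (b * a) f, hfc,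
        mul_assoc (b * a) f f, hff, ← mul_assoc (b * a) (b * a) f, hcc, zero_mul]
    have h2 : b * a * f * (1 - f) = 0 := by
      rw [mul_assoc, mul_sub, mul_one, hff, sub_self, mul_zero]
    have h3 : (1 - f) * (b * a * f) = 0 := by
      rw [sub_mul, one_mul, ← mul_assoc f (b * a) f, hfc, mul_assoc (b * a) f f, hff,
        sub_self]
    rw [add_mul, mul_add, mul_add, h1, h2, h3, h4, zero_add, zero_add, zero_add]
  rw [hsq] at hBAidem
  have : b * a * f + (1 - f) = 0 + (1 - f) := by rw [zero_add, ← hBAidem]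
  exact add_right_cancel this

/-- If `R` has a non-trivial central idempotent and `T(R,R)` is i-reversible, then `R` is
reversible. -/
theorem isReversible_of_trivSqZeroExt_isIReversible (R : Type*) [Ring R] (e : R)
    (he : IsIdempotentElem e) (he0 : e ≠ 0) (he1 : e ≠ 1)
    (hcentral : ∀ r : R, e * r = r * e)
    (h : IsIReversible (TrivSqZeroExt R R)) : IsReversible R := by
  intro a b hab
  set T := TrivSqZeroExt R R
  have inl_inj : Function.Injective (TrivSqZeroExt.inl : R → T) :=
    TrivSqZeroExt.inl_injective
  have hmul : ∀ x y : R, (TrivSqZeroExt.inl x : T) * TrivSqZeroExt.inl y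
      = TrivSqZeroExt.inl (x * y) := fun x y => (TrivSqZeroExt.inl_mul_inl R x y)
  have habT : (TrivSqZeroExt.inl a : T) * TrivSqZeroExt.inl b = 0 := by
    rw [hmul, hab, TrivSqZeroExt.inl_zero]
  -- f = inl e
  have hfe : IsIdempotentElem (TrivSqZeroExt.inl e : T) := by
    unfold IsIdempotentElem; rw [hmul, he]
  have hfe1 : (TrivSqZeroExt.inl e : T) ≠ 1 := by
    rw [← TrivSqZeroExt.inl_one]; exact fun hc => he1 (inl_inj hc)
  have key1 := key_aux h (TrivSqZeroExt.inl e) (TrivSqZeroExt.inl a) (TrivSqZeroExt.inl b)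
    hfe hfe1 (by rw [hmul, hmul, hcentral a]) (by rw [hmul, hmul, hcentral b]) habT
  -- f = inl (1 - e)
  have he' : IsIdempotentElem (1 - e) := he.one_sub
  have hfe' : IsIdempotentElem (TrivSqZeroExt.inl (1 - e) : T) := by
    unfold IsIdempotentElem; rw [hmul, he']
  have hfe'1 : (TrivSqZeroExt.inl (1 - e) : T) ≠ 1 := by
    rw [← TrivSqZeroExt.inl_one]
    intro hc
    have h1 : (1 : R) - e = 1 := inl_inj hc
    exact he0 (by rw [sub_eq_self] at h1; exact h1)
  have hcentral' : ∀ r : R, (1 - e) * r = r * (1 - e) := fun r => by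
    rw [sub_mul, one_mul, mul_sub, mul_one, hcentral r]
  have key2 := key_aux h (TrivSqZeroExt.inl (1 - e)) (TrivSqZeroExt.inl a)
    (TrivSqZeroExt.inl b) hfe' hfe'1 (by rw [hmul, hmul, hcentral' a])
    (by rw [hmul, hmul, hcentral' b]) habT
  rw [hmul, hmul] at key1 key2
  rw [← TrivSqZeroExt.inl_zero R] at key1 key2
  have k1 : b * a * e = 0 := inl_inj key1
  have k2 : b * a * (1 - e) = 0 := inl_inj key2
  have : b * a = b * a * e + b * a * (1 - e) := by rw [mul_sub, mul_one]; abel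
  rw [this, k1, k2, add_zero]
end

section
/- Let S be a commutative ring and R an S-algebra (not necessarily unital) containing a non-zero central idempotent e. Then the Dorroh extension D of R by S is i-reversible if and only if D is reversible. -/
/-!
Reversible rings are always i-reversible. Conversely, let `f` be a central idempotent of an
i-reversible ring with `f ≠ 0, 1`, let `a * b = 0` and put `g = 1 - f`. Then
`(f + g * a) * (f + b * g) = f` is a non-zero idempotent, so `(f + b * g) * (f + g * a) = f + w`
with `w = g * b * a` is idempotent; as `f * w = w * f = w * w = 0`, this forces `w = 0`.
Exchanging `f` and `g` gives `f * b * a = 0`, hence `b * a = 0`. In the Dorroh extension the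
image of `e` is such an idempotent: it is central, non-zero, and differs from `1`.
-/

section

variable {D : Type*} [Ring D]

theorem IsReversible.isIReversible (h : IsReversible D) : IsIReversible D := by
  intro a b hab _
  have key : a * (b * (a * b) - b) = 0 := by
    calc a * (b * (a * b) - b) = a * b * (a * b) - a * b := by noncomm_ring
      _ = 0 := by rw [hab.eq, sub_self]
  calc b * a * (b * a) = (b * (a * b) - b) * a + b * a := by noncomm_ring
    _ = b * a := by rw [h _ _ key, zero_add]

theorem IsIdempotentElem.mul_mul_one_sub_of_commute {f : D} (hf : IsIdempotentElem f)
    (hfc : ∀ y, Commute f y) (x : D) : f * x * (1 - f) = 0 := by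
  rw [(hfc x).eq, mul_assoc, hf.mul_one_sub_self, mul_zero]

theorem IsIdempotentElem.one_sub_mul_mul_of_commute {f : D} (hf : IsIdempotentElem f)
    (hfc : ∀ y, Commute f y) (x : D) : (1 - f) * x * f = 0 := by
  rw [mul_assoc, ← (hfc x).eq, ← mul_assoc, hf.one_sub_mul_self, zero_mul]

theorem IsIReversible.one_sub_mul_mul_eq_zero (h : IsIReversible D) {f : D}
    (hf : IsIdempotentElem f) (hf0 : f ≠ 0) (hfc : ∀ y, Commute f y) {a b : D}
    (hab : a * b = 0) : (1 - f) * (b * a) = 0 := by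
  set g := 1 - f
  set w := g * (b * a)
  have hg : IsIdempotentElem g := hf.one_sub
  have hgc : ∀ y, Commute g y := fun y => (Commute.one_left y).sub_left (hfc y)
  have hvu : (f + g * a) * (f + b * g) = f := by
    calc (f + g * a) * (f + b * g) = f * f + f * b * g + g * a * f + g * (a * b) * g := by
          noncomm_ring
      _ = f := by
          rw [hf.eq, hf.mul_mul_one_sub_of_commute hfc, hf.one_sub_mul_mul_of_commute hfc, hab]
          simp
  have huv : (f + b * g) * (f + g * a) = f + w := by
    calc (f + b * g) * (f + g * a) = f * f + f * g * a + b * (g * f) + b * (g * g) * a := by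
          noncomm_ring
      _ = f + w := by
          rw [hf.eq, hf.mul_one_sub_self, hf.one_sub_mul_self, hg.eq, ← (hgc b).eq]
          simp [w, mul_assoc]
  have hp : IsIdempotentElem (f + w) := by
    rw [← huv]
    exact h _ _ (by rw [hvu]; exact hf) (by rw [hvu]; exact hf0)
  have hfw : f * w = 0 := by rw [← mul_assoc, hf.mul_one_sub_self, zero_mul]
  have hwf : w * f = 0 := hf.one_sub_mul_mul_of_commute hfc _
  have hww : w * w = 0 := by
    calc w * w = g * (b * a * g) * (b * a) := by simp only [w, mul_assoc]
      _ = g * g * (b * (a * b) * a) := by rw [← (hgc (b * a)).eq]; noncomm_ring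
      _ = 0 := by rw [hab, mul_zero, zero_mul, mul_zero]
  have hsq : (f + w) * (f + w) = f := by
    rw [add_mul, mul_add, mul_add, hf.eq, hfw, hwf, hww, add_zero, add_zero, add_zero]
  simpa [hsq] using hp.eq.symm

theorem isIReversible_iff_isReversible_of_isIdempotentElem {f : D} (hf : IsIdempotentElem f)
    (hf0 : f ≠ 0) (hf1 : f ≠ 1) (hfc : ∀ y, Commute f y) : IsIReversible D ↔ IsReversible D := by
  refine ⟨fun h a b hab => ?_, IsReversible.isIReversible⟩
  have hg0 : 1 - f ≠ 0 := sub_ne_zero.2 hf1.symm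
  have hgc : ∀ y, Commute (1 - f) y := fun y => (Commute.one_left y).sub_left (hfc y)
  have h1 := h.one_sub_mul_mul_eq_zero hf hf0 hfc hab
  have h2 := h.one_sub_mul_mul_eq_zero hf.one_sub hg0 hgc hab
  rw [sub_sub_cancel] at h2
  calc b * a = (1 - f) * (b * a) + f * (b * a) := by noncomm_ring
    _ = 0 := by rw [h1, h2, add_zero]

end

theorem Unitization.commute_inr {S R : Type*} [CommSemiring S] [NonUnitalNonAssocSemiring R]
    [Module S R] {e : R} (he : ∀ r : R, Commute e r) (x : Unitization S R) :
    Commute (e : Unitization S R) x := by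
  ext <;> simp [(he _).eq]

/-- For a commutative ring `S` and a (not necessarily unital) `S`-algebra `R` containing a
non-zero central idempotent, the Dorroh extension of `R` by `S` (here `Unitization S R`) is
i-reversible if and only if it is reversible. -/
theorem dorroh_isIReversible_iff_isReversible (S : Type*) [CommRing S] (R : Type*)
    [NonUnitalRing R] [Module S R] [IsScalarTower S R R] [SMulCommClass S R R]
    (e : R) (he : e * e = e) (he0 : e ≠ 0) (hcentral : ∀ r : R, e * r = r * e) :
    IsIReversible (Unitization S R) ↔ IsReversible (Unitization S R) := by
  have hf : IsIdempotentElem (e : Unitization S R) := by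
    rw [IsIdempotentElem, ← Unitization.inr_mul, he]
  have hf0 : (e : Unitization S R) ≠ 0 := fun h => he0 (by simpa using congrArg (·.snd) h)
  have hf1 : (e : Unitization S R) ≠ 1 := fun h => he0 (by simpa using congrArg (·.snd) h)
  exact isIReversible_iff_isReversible_of_isIdempotentElem hf hf0 hf1
    (Unitization.commute_inr hcentral)
end

section
/- If a ring R has only trivial idempotents, then the polynomial ring R[x], the power series ring R[[x]], and the Laurent polynomial ring R[x, x^{-1}] are all i-reversible. -/
/-!
If `e` is idempotent and `z ∣ e` for a central `z`, then `e = e ^ n` is divisible by `z ^ n`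
for every `n`. With `z = X` this shows that an idempotent power series with constant
coefficient `0` vanishes. Applied to `e` and `1 - e`, this shows that `R⟦X⟧` has only trivial
idempotents when `R` has. Both `R[X]` and `R[T;T⁻¹]` embed into `R⟦X⟧`, the latter by
`T ↦ 1 + X`, which on polynomials is the injective Taylor shift `p ↦ p(X + 1)`. Finally, in a
ring with only trivial idempotents a non-zero idempotent `a * b` equals `1`, so
`(b * a) ^ 2 = b * (a * b) * a = b * a`.
-/

open scoped Polynomial LaurentPolynomial PowerSeries

theorem HasOnlyTrivialIdempotents.isIReversible {S : Type*} [Ring S]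
    (h : HasOnlyTrivialIdempotents S) : IsIReversible S := by
  intro a b hab hne
  have hab1 : a * b = 1 := (h _ hab).resolve_left hne
  show b * a * (b * a) = b * a
  rw [mul_assoc, ← mul_assoc a, hab1, one_mul]

theorem HasOnlyTrivialIdempotents.of_ringHom {S T : Type*} [Ring S] [Ring T] (f : S →+* T)
    (hT : HasOnlyTrivialIdempotents T) (hf : ∀ e, IsIdempotentElem e → f e = 0 → e = 0) :
    HasOnlyTrivialIdempotents S := by
  intro e he
  refine (hT _ (he.map f)).imp (hf e he) fun h1 => ?_
  have h0 : 1 - e = 0 := hf _ he.one_sub (by rw [map_sub, map_one, h1, sub_self])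
  exact (sub_eq_zero.mp h0).symm

theorem HasOnlyTrivialIdempotents.of_injective {S T : Type*} [Ring S] [Ring T] (f : S →+* T)
    (hf : Function.Injective f) (hT : HasOnlyTrivialIdempotents T) :
    HasOnlyTrivialIdempotents S :=
  of_ringHom f hT fun e _ => (injective_iff_map_eq_zero f).mp hf e

theorem IsIdempotentElem.pow_dvd_of_dvd {M : Type*} [Monoid M] {e z : M}
    (he : IsIdempotentElem e) (hz : ∀ x, Commute z x) (hdvd : z ∣ e) (n : ℕ) : z ^ n ∣ e := by
  obtain ⟨g, rfl⟩ := hdvd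
  rcases n with _ | n
  · exact (pow_zero z).symm ▸ one_dvd _
  · exact Dvd.intro (g ^ (n + 1)) (by rw [← (hz g).mul_pow, he.pow_succ_eq])

namespace PowerSeries

variable {R : Type*} [Ring R]

theorem eq_zero_of_isIdempotentElem_of_constantCoeff_eq_zero {e : R⟦X⟧}
    (he : IsIdempotentElem e) (h0 : constantCoeff e = 0) : e = 0 := by
  ext n
  have hdvd : X ^ (n + 1) ∣ e :=
    he.pow_dvd_of_dvd (fun φ => (commute_X φ).symm) (X_dvd_iff.mpr h0) (n + 1)
  simpa using X_pow_dvd_iff.mp hdvd n n.lt_succ_self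

theorem hasOnlyTrivialIdempotents (h : HasOnlyTrivialIdempotents R) :
    HasOnlyTrivialIdempotents R⟦X⟧ :=
  .of_ringHom constantCoeff h fun _ => eq_zero_of_isIdempotentElem_of_constantCoeff_eq_zero

theorem isUnit_one_add_X : IsUnit (1 + X : R⟦X⟧) :=
  isUnit_iff_constantCoeff.mpr (by simp)

end PowerSeries

theorem Polynomial.hasOnlyTrivialIdempotents {R : Type*} [Ring R]
    (h : HasOnlyTrivialIdempotents R) : HasOnlyTrivialIdempotents R[X] :=
  .of_injective coeToPowerSeries.ringHom (coe_injective R)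
    (PowerSeries.hasOnlyTrivialIdempotents h)

namespace LaurentPolynomial

variable {R : Type*} [Ring R]

noncomputable def evalOneAddX : R[T;T⁻¹] →+* R⟦X⟧ :=
  AddMonoidAlgebra.liftNCRingHom PowerSeries.C
    ((Units.coeHom _).comp (zpowersHom _ PowerSeries.isUnit_one_add_X.unit))
    fun _ _ => Commute.units_zpow_right
      ((Commute.one_right _).add_right (PowerSeries.commute_X _)) _

theorem evalOneAddX_single (n : ℤ) (a : R) :
    evalOneAddX (.single n a : R[T;T⁻¹]) =
      PowerSeries.C a * ↑((PowerSeries.isUnit_one_add_X (R := R)).unit ^ n) :=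
  AddMonoidAlgebra.liftNCRingHom_single _ _ _ _ _

theorem evalOneAddX_toLaurent (p : R[X]) :
    evalOneAddX (Polynomial.toLaurent p) = (Polynomial.taylor 1 p : R⟦X⟧) := by
  induction p using Polynomial.induction_on' with
  | add p q hp hq => simp only [map_add, hp, hq, Polynomial.coe_add]
  | monomial n a =>
    rw [Polynomial.toLaurent_C_mul_T, ← single_eq_C_mul_T, evalOneAddX_single]
    simp [add_comm]

theorem evalOneAddX_injective : Function.Injective (evalOneAddX (R := R)) := by
  refine (injective_iff_map_eq_zero _).mpr fun f hf => ?_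
  obtain ⟨n, p, hp⟩ := exists_T_pow f
  have hp0 : p = 0 := by
    apply Polynomial.taylor_injective 1
    apply Polynomial.coe_injective
    rw [map_zero, ← evalOneAddX_toLaurent, hp, map_mul, hf, zero_mul, Polynomial.coe_zero]
  rw [hp0, map_zero] at hp
  exact (isUnit_T n).mul_left_eq_zero.mp hp.symm

theorem hasOnlyTrivialIdempotents (h : HasOnlyTrivialIdempotents R) :
    HasOnlyTrivialIdempotents R[T;T⁻¹] :=
  .of_injective evalOneAddX evalOneAddX_injective (PowerSeries.hasOnlyTrivialIdempotents h)

end LaurentPolynomial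

/-- If a ring `R` has only trivial idempotents, then `R[x]`, `R[[x]]` and `R[x, x⁻¹]` are
all i-reversible. -/
theorem polynomial_powerSeries_laurent_isIReversible (R : Type*) [Ring R]
    (h : HasOnlyTrivialIdempotents R) :
    IsIReversible (Polynomial R) ∧ IsIReversible (PowerSeries R) ∧
      IsIReversible (LaurentPolynomial R) :=
  ⟨(Polynomial.hasOnlyTrivialIdempotents h).isIReversible,
    (PowerSeries.hasOnlyTrivialIdempotents h).isIReversible,
    (LaurentPolynomial.hasOnlyTrivialIdempotents h).isIReversible⟩
end

section
/- Let R be a ring with only trivial idempotents and σ a ring endomorphism of R with σ(1) = 1. Then the skew polynomial ring R[x; σ] is i-reversible; in fact, every non-zero idempotent of R[x; σ] equals 1. -/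
/-- The skew polynomial ring `R[x; σ]`: left polynomials over `R` (represented as finitely
supported coefficient functions `ℕ →₀ R`), with multiplication determined by the rule
`x * b = σ b * x`, i.e. `(a xⁱ) * (b xʲ) = (a * σⁱ b) x^(i + j)`. Note that `σ`, being a
ring homomorphism, satisfies `σ 1 = 1`. -/
def SkewPolyRing (R : Type*) [Ring R] (σ : R →+* R) : Type _ := ℕ →₀ R

namespace SkewPolyRing

variable {R : Type*} [Ring R] {σ : R →+* R}

noncomputable instance : AddCommGroup (SkewPolyRing R σ) :=
  inferInstanceAs (AddCommGroup (ℕ →₀ R))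

noncomputable instance : Mul (SkewPolyRing R σ) :=
  ⟨fun p q => Finsupp.sum p fun i a => Finsupp.sum q fun j b =>
    Finsupp.single (i + j) (a * (⇑σ)^[i] b)⟩

noncomputable instance : One (SkewPolyRing R σ) := ⟨Finsupp.single 0 (1 : R)⟩

lemma mul_def (p q : SkewPolyRing R σ) :
    p * q = Finsupp.sum p fun i a => Finsupp.sum q fun j b =>
      Finsupp.single (i + j) (a * (⇑σ)^[i] b) := rfl

noncomputable instance : Ring (SkewPolyRing R σ) :=
  { (inferInstance : AddCommGroup (SkewPolyRing R σ)),
    (inferInstance : Mul (SkewPolyRing R σ)),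
    (inferInstance : One (SkewPolyRing R σ)) with
    mul_assoc := by
      intro (p : (ℕ →₀ R)) (q : (ℕ →₀ R)) (r : (ℕ →₀ R))
      show (Finsupp.sum (Finsupp.sum p fun i a => Finsupp.sum q fun j b =>
          Finsupp.single (i + j) (a * (⇑σ)^[i] b)) fun k c => Finsupp.sum r fun l d =>
          Finsupp.single (k + l) (c * (⇑σ)^[k] d)) =
        (Finsupp.sum p fun i a => Finsupp.sum (Finsupp.sum q fun j b =>
          Finsupp.sum r fun l d => Finsupp.single (j + l) (b * (⇑σ)^[j] d)) fun j b =>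
          Finsupp.single (i + j) (a * (⇑σ)^[i] b))
      rw [Finsupp.sum_sum_index (fun i => by simp [Finsupp.sum])
        (fun i b₁ b₂ => by
          rw [← Finsupp.sum_add]
          congr 1; ext l d
          simp [add_mul, Finsupp.single_add])]
      refine Finsupp.sum_congr fun i _ => ?_
      rw [Finsupp.sum_sum_index (fun j => by simp [Finsupp.sum])
        (fun j b₁ b₂ => by
          rw [← Finsupp.sum_add]
          congr 1; ext l d
          simp [add_mul, Finsupp.single_add]),
        Finsupp.sum_sum_index (fun j => by simp)
        (fun j b₁ b₂ => by simp [iterate_map_add, mul_add, Finsupp.single_add])]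
      refine Finsupp.sum_congr fun j _ => ?_
      rw [Finsupp.sum_single_index (by simp [Finsupp.sum]),
        Finsupp.sum_sum_index (fun l => by simp)
          (fun l b₁ b₂ => by simp [iterate_map_add, mul_add, Finsupp.single_add])]
      refine Finsupp.sum_congr fun l _ => ?_
      rw [Finsupp.sum_single_index (by simp)]
      rw [add_assoc, Function.iterate_add_apply, iterate_map_mul, mul_assoc]
    one_mul := by
      intro (p : (ℕ →₀ R))
      show (Finsupp.sum (Finsupp.single 0 (1 : R)) fun i a => Finsupp.sum p fun j b =>
        Finsupp.single (i + j) (a * (⇑σ)^[i] b)) = p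
      rw [Finsupp.sum_single_index]
      · simp [Finsupp.sum_single]
      · simp [Finsupp.sum]
    mul_one := by
      intro (p : (ℕ →₀ R))
      show (Finsupp.sum p fun i a => Finsupp.sum (Finsupp.single 0 (1 : R)) fun j b =>
        Finsupp.single (i + j) (a * (⇑σ)^[i] b)) = p
      have : (Finsupp.sum p fun i a => Finsupp.sum (Finsupp.single 0 (1 : R)) fun j b =>
          Finsupp.single (i + j) (a * (⇑σ)^[i] b)) = Finsupp.sum p fun i a =>
            Finsupp.single i a := by
        refine Finsupp.sum_congr fun i _ => ?_
        rw [Finsupp.sum_single_index (by simp)]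
        simp [iterate_map_one]
      rw [this, Finsupp.sum_single]
    left_distrib := by
      intro (p : (ℕ →₀ R)) (q : (ℕ →₀ R)) (r : (ℕ →₀ R))
      show (Finsupp.sum p fun i a => Finsupp.sum (q + r) fun j b =>
          Finsupp.single (i + j) (a * (⇑σ)^[i] b)) =
        (Finsupp.sum p fun i a => Finsupp.sum q fun j b =>
          Finsupp.single (i + j) (a * (⇑σ)^[i] b)) +
        (Finsupp.sum p fun i a => Finsupp.sum r fun j b =>
          Finsupp.single (i + j) (a * (⇑σ)^[i] b))
      rw [← Finsupp.sum_add]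
      congr 1
      ext i a
      rw [Finsupp.sum_add_index (by simp)
        (by intro j _ b₁ b₂; simp [mul_add, Finsupp.single_add])]
    right_distrib := by
      intro (p : (ℕ →₀ R)) (q : (ℕ →₀ R)) (r : (ℕ →₀ R))
      show (Finsupp.sum (p + q) fun i a => Finsupp.sum r fun j b =>
          Finsupp.single (i + j) (a * (⇑σ)^[i] b)) =
        (Finsupp.sum p fun i a => Finsupp.sum r fun j b =>
          Finsupp.single (i + j) (a * (⇑σ)^[i] b)) +
        (Finsupp.sum q fun i a => Finsupp.sum r fun j b =>
          Finsupp.single (i + j) (a * (⇑σ)^[i] b))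
      rw [Finsupp.sum_add_index (by simp [Finsupp.sum]) ?_]
      intro i _ a₁ a₂
      rw [← Finsupp.sum_add]
      congr 1
      ext j b
      simp [add_mul, Finsupp.single_add]
    zero_mul := by
      intro a
      show Finsupp.sum 0 _ = 0
      simp [Finsupp.sum_zero_index]
    mul_zero := by
      intro (a : (ℕ →₀ R))
      show Finsupp.sum a _ = 0
      exact Finset.sum_eq_zero fun i _ => Finsupp.sum_zero_index }

end SkewPolyRing

/-!
An idempotent `p` of `R[x; σ]` has an idempotent constant term, so `p(0) ∈ {0, 1}`; replacing
`p` by `1 - p` we may assume `p(0) = 0`. If then `p ≠ 0` and `n` is the least degree with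
`pₙ ≠ 0`, every term `pᵢ σⁱ(pⱼ)` with `i + j = n` of the `n`-th coefficient of `p²` vanishes
(either `i < n`, or `j = 0`), so `pₙ = (p²)ₙ = 0`, a contradiction. Hence `1` is the only
non-zero idempotent, and `ab = 1` makes `ba` idempotent.
-/

namespace SkewPolyRing

variable {R : Type*} [Ring R] {σ : R →+* R}

def coeff (p : SkewPolyRing R σ) (n : ℕ) : R := DFunLike.coe (F := ℕ →₀ R) p n

def support (p : SkewPolyRing R σ) : Finset ℕ := Finsupp.support (M := R) p

lemma mem_support_iff {p : SkewPolyRing R σ} {n : ℕ} : n ∈ p.support ↔ p.coeff n ≠ 0 :=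
  Finsupp.mem_support_iff

lemma ext {p q : SkewPolyRing R σ} (h : ∀ n, p.coeff n = q.coeff n) : p = q :=
  Finsupp.ext h

lemma coeff_mul (p q : SkewPolyRing R σ) (n : ℕ) :
    (p * q).coeff n = ∑ i ∈ p.support, ∑ j ∈ q.support,
      if i + j = n then p.coeff i * (⇑σ)^[i] (q.coeff j) else 0 := by
  refine Finsupp.sum_apply.trans (Finset.sum_congr rfl fun i _ => ?_)
  refine Finsupp.sum_apply.trans (Finset.sum_congr rfl fun j _ => ?_)
  exact Finsupp.single_apply

lemma coeff_mul_zero (p q : SkewPolyRing R σ) :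
    (p * q).coeff 0 = p.coeff 0 * q.coeff 0 := by
  simp only [coeff_mul, Nat.add_eq_zero_iff, ite_and, Finset.sum_ite_eq', Finset.sum_ite_irrel,
    Finset.sum_const_zero, Function.iterate_zero, id_eq]
  split_ifs <;> simp_all [mem_support_iff]

lemma coeff_mul_eq_zero_of_lt {p q : SkewPolyRing R σ} {k l n : ℕ}
    (hp : ∀ i < k, p.coeff i = 0) (hq : ∀ j < l, q.coeff j = 0) (hn : n < k + l) :
    (p * q).coeff n = 0 := by
  rw [coeff_mul]
  refine Finset.sum_eq_zero fun i hi => Finset.sum_eq_zero fun j hj => if_neg ?_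
  have hki : k ≤ i := not_lt.1 fun h => mem_support_iff.1 hi (hp i h)
  have hlj : l ≤ j := not_lt.1 fun h => mem_support_iff.1 hj (hq j h)
  omega

noncomputable def constantCoeff : SkewPolyRing R σ →+* R where
  toFun p := p.coeff 0
  map_zero' := rfl
  map_add' _ _ := rfl
  map_one' := Finsupp.single_eq_same
  map_mul' := coeff_mul_zero

lemma IsIdempotentElem.eq_zero_of_constantCoeff_eq_zero {p : SkewPolyRing R σ}
    (hp : IsIdempotentElem p) (h0 : constantCoeff p = 0) : p = 0 := by
  classical
  by_contra hne
  have hex : ∃ n, p.coeff n ≠ 0 := by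
    by_contra! hall
    exact hne (ext hall)
  have hmin : ∀ m < Nat.find hex, p.coeff m = 0 := fun m hm => not_not.1 (Nat.find_min hex hm)
  have hconst : ∀ j < 1, p.coeff j = 0 := fun j hj => Nat.lt_one_iff.1 hj ▸ h0
  have hsq := coeff_mul_eq_zero_of_lt hmin hconst (Nat.lt_succ_self _)
  rw [hp.eq] at hsq
  exact Nat.find_spec hex hsq

end SkewPolyRing

lemma isIReversible_of_isIdempotentElem_eq_one {S : Type*} [Ring S]
    (h : ∀ e : S, IsIdempotentElem e → e ≠ 0 → e = 1) : IsIReversible S := by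
  intro a b hab hne
  have hab1 : a * b = 1 := h _ hab hne
  show b * a * (b * a) = b * a
  rw [mul_assoc, ← mul_assoc a, hab1, one_mul]

open SkewPolyRing in
/-- If `R` has only trivial idempotents and `σ` is a (unital) ring endomorphism of `R`, then
the skew polynomial ring `R[x; σ]` is i-reversible; in fact every non-zero idempotent of
`R[x; σ]` is equal to `1`. -/
theorem skewPolynomial_isIReversible (R : Type*) [Ring R] (σ : R →+* R)
    (h : HasOnlyTrivialIdempotents R) :
    IsIReversible (SkewPolyRing R σ) ∧
      ∀ p : SkewPolyRing R σ, IsIdempotentElem p → p ≠ 0 → p = 1 := by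
  have eq_one : ∀ p : SkewPolyRing R σ, IsIdempotentElem p → p ≠ 0 → p = 1 := by
    intro p hp hne
    rcases h _ (hp.map constantCoeff) with h0 | h1
    · exact absurd (hp.eq_zero_of_constantCoeff_eq_zero h0) hne
    · have h1p := hp.one_sub.eq_zero_of_constantCoeff_eq_zero
        (by rw [map_sub, map_one, h1, sub_self])
      exact (sub_eq_zero.1 h1p).symm
  exact ⟨isIReversible_of_isIdempotentElem_eq_one eq_one, eq_one⟩
end
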